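/- The cubic interaction kernel matrix Γ̂(z) = (μ/(16π(1-ν)))·[[ν+1-3ν z₂², 3ν z₁ z₂],[3ν z₁ z₂, ν+1-3ν z₁²]], for a unit vector z = (z₁,z₂) ∈ S¹, with μ > 0 and ν ∈ (-1, 1/2), is symmetric positive definite: there exists c > 0 (depending only on μ, ν) such that c⁻¹|v|² ≤ v·Γ̂(z)v ≤ c|v|² for all v ∈ ℝ² and all unit vectors z. -/
import Mathlib


open Matrix

/-- The cubic interaction kernel matrix `Γ̂(z)` for a unit vector `z = (z₁,z₂)`. -/
noncomputable def Gammahat (μ ν z₁ z₂ : ℝ) : Matrix (Fin 2) (Fin 2) ℝ :=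
  (μ / (16 * Real.pi * (1 - ν))) •
    !![ν + 1 - 3 * ν * z₂ ^ 2, 3 * ν * z₁ * z₂;
       3 * ν * z₁ * z₂, ν + 1 - 3 * ν * z₁ ^ 2]

theorem stmt5 (μ ν : ℝ) (hμ : 0 < μ) (hν : ν ∈ Set.Ioo (-1 : ℝ) (1 / 2)) :
    (∀ z₁ z₂ : ℝ, z₁ ^ 2 + z₂ ^ 2 = 1 → (Gammahat μ ν z₁ z₂).IsSymm) ∧
    ∃ c > 0, ∀ z₁ z₂ : ℝ, z₁ ^ 2 + z₂ ^ 2 = 1 → ∀ v : Fin 2 → ℝ,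
      c⁻¹ * (v 0 ^ 2 + v 1 ^ 2) ≤ v ⬝ᵥ (Gammahat μ ν z₁ z₂).mulVec v ∧
      v ⬝ᵥ (Gammahat μ ν z₁ z₂).mulVec v ≤ c * (v 0 ^ 2 + v 1 ^ 2) := by
  obtain ⟨hν1, hν2⟩ := hν
  have hπ := Real.pi_pos
  set k : ℝ := μ / (16 * Real.pi * (1 - ν)) with hkdef
  have hk : 0 < k := by
    apply div_pos hμ
    have : (0:ℝ) < 1 - ν := by linarith
    positivity
  constructor
  · intro z₁ z₂ hz
    rw [Matrix.IsSymm]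
    ext i j
    fin_cases i <;> fin_cases j <;>
      simp [Gammahat, Matrix.transpose_apply] <;> ring
  · set m : ℝ := k * min (1 - 2*ν) (1 + ν) with hmdef
    set M : ℝ := k * max (1 - 2*ν) (1 + ν) with hMdef
    have hm : 0 < m := by
      apply mul_pos hk
      rcases le_total (1 - 2*ν) (1 + ν) with h | h
      · rw [min_eq_left h]; linarith
      · rw [min_eq_right h]; linarith
    have hM : 0 < M := by
      apply mul_pos hk
      rcases le_total (1 - 2*ν) (1 + ν) with h | h
      · rw [max_eq_right h]; linarith
      · rw [max_eq_left h]; linarith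
    refine ⟨max M m⁻¹, lt_max_of_lt_right (inv_pos.mpr hm), ?_⟩
    intro z₁ z₂ hz v
    have hQ : v ⬝ᵥ (Gammahat μ ν z₁ z₂).mulVec v
        = k * ((1 + ν) * (v 0 ^ 2 + v 1 ^ 2) - 3 * ν * (z₂ * v 0 - z₁ * v 1) ^ 2) := by
      simp [Gammahat, Matrix.mulVec, dotProduct, Fin.sum_univ_two]
      ring
    have hs0 : (0:ℝ) ≤ (z₂ * v 0 - z₁ * v 1) ^ 2 := sq_nonneg _
    have hsn : (z₂ * v 0 - z₁ * v 1) ^ 2 ≤ v 0 ^ 2 + v 1 ^ 2 := by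
      nlinarith [sq_nonneg (z₁ * v 0 + z₂ * v 1)]
    have hn0 : (0:ℝ) ≤ v 0 ^ 2 + v 1 ^ 2 := by positivity
    have hlow : m * (v 0 ^ 2 + v 1 ^ 2) ≤ v ⬝ᵥ (Gammahat μ ν z₁ z₂).mulVec v := by
      rw [hQ, hmdef, mul_assoc k]
      apply mul_le_mul_of_nonneg_left _ hk.le
      rcases le_total ν 0 with h | h
      · have : min (1 - 2*ν) (1 + ν) = 1 + ν := min_eq_right (by linarith)
        rw [this]; nlinarith
      · have : min (1 - 2*ν) (1 + ν) = 1 - 2*ν := min_eq_left (by linarith)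
        rw [this]; nlinarith
    have hhigh : v ⬝ᵥ (Gammahat μ ν z₁ z₂).mulVec v ≤ M * (v 0 ^ 2 + v 1 ^ 2) := by
      rw [hQ, hMdef, mul_assoc k]
      apply mul_le_mul_of_nonneg_left _ hk.le
      rcases le_total ν 0 with h | h
      · have : max (1 - 2*ν) (1 + ν) = 1 - 2*ν := max_eq_left (by linarith)
        rw [this]; nlinarith
      · have : max (1 - 2*ν) (1 + ν) = 1 + ν := max_eq_right (by linarith)
        rw [this]; nlinarith
    constructor
    · refine le_trans ?_ hlow
      apply mul_le_mul_of_nonneg_right _ hn0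
      rw [inv_le_comm₀ (lt_max_of_lt_right (inv_pos.mpr hm)) hm]
      exact le_max_right _ _
    · refine le_trans hhigh ?_
      exact mul_le_mul_of_nonneg_right (le_max_left _ _) hn0
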